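/- arXiv:1709.09459 — 4 statements merged into one kernel-verified Lean document; each statement's English description precedes it below -/
import Mathlib

section
/- Let A be an irreducible nonnegative matrix indexed by a countable set S (i.e., for all x,y in S there exists n ≥ 1 with A^n(x,y) > 0), and assume A is aperiodic (gcd{n ≥ 1 : A^n(x,x) > 0} = 1 for some x). Then the limit ρ(A) := lim_{n→∞} (A^n(x,x))^{1/n} exists in (0,∞] and does not depend on the choice of x ∈ S. -/
open scoped ENNReal
open Filter

variable {S : Type*}

/-- Matrix powers of a nonnegative (possibly infinite-sum) matrix on a countable set. -/
noncomputable def matPow [DecidableEq S] (A : S → S → ℝ≥0∞) : ℕ → S → S → ℝ≥0∞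
  | 0 => fun x y => if x = y then 1 else 0
  | n + 1 => fun x y => ∑' z, matPow A n x z * A z y

/-!
The diagonal sequence `a n = A^n(x,x)` is supermultiplicative (a loop of length `m + n` may pass
through `x` at time `m`), so by Fekete's lemma `a n ^ (1/n)` tends to `ρ x = ⨆ k ≥ 1, a k ^ (1/k)`
as soon as `a n > 0` for all large `n`. The return times to `x` form an additive submonoid of `ℕ`,
and irreducibility lets the period of `x` divide every return time of the aperiodic point, so
this submonoid has gcd `1` and contains all large `n`. Finally, going from `y` to `x` in `s` steps,
looping `n` times at `x` and returning in `t` steps gives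
`A^s(y,x) A^n(x,x) A^t(x,y) ≤ A^(s+n+t)(y,y) ≤ ρ y ^ (s+n+t)`, whence `ρ x ≤ ρ y`.
-/

open Topology

namespace ENNReal

theorem tendsto_rpow_inv_natCast_one {c : ℝ≥0∞} (hc0 : c ≠ 0) (hct : c ≠ ∞) :
    Tendsto (fun n : ℕ => c ^ (n : ℝ)⁻¹) atTop (𝓝 1) := by
  have hc : 0 < c.toReal := ENNReal.toReal_pos hc0 hct
  have hreal : Tendsto (fun n : ℕ => c.toReal ^ (n : ℝ)⁻¹) atTop (𝓝 1) := by
    have := (Real.continuousAt_const_rpow (b := 0) hc.ne').tendsto.comp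
      (tendsto_inv_atTop_nhds_zero_nat (𝕜 := ℝ))
    rwa [Real.rpow_zero] at this
  simpa [← ENNReal.ofReal_rpow_of_pos hc, ENNReal.ofReal_toReal hct] using
    ENNReal.tendsto_ofReal hreal

theorem tendsto_mul_pow_rpow_inv {c : ℝ≥0∞} (hc0 : c ≠ 0) (hct : c ≠ ∞) (r : ℝ≥0∞) :
    Tendsto (fun n : ℕ => (c * r ^ n) ^ (n : ℝ)⁻¹) atTop (𝓝 r) := by
  have hlim : Tendsto (fun n : ℕ => c ^ (n : ℝ)⁻¹ * r) atTop (𝓝 r) := by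
    simpa using
      ENNReal.Tendsto.mul_const (tendsto_rpow_inv_natCast_one hc0 hct) (Or.inl one_ne_zero)
  refine hlim.congr' ?_
  filter_upwards [eventually_ne_atTop 0] with n hn
  rw [ENNReal.mul_rpow_of_nonneg _ _ (by positivity), ENNReal.pow_rpow_inv_natCast hn]

theorem le_of_tendsto_rpow_inv_of_mul_le_pow {a : ℕ → ℝ≥0∞} {L r c : ℝ≥0∞} (K : ℕ)
    (hlim : Tendsto (fun n : ℕ => a n ^ (n : ℝ)⁻¹) atTop (𝓝 L)) (hc : c ≠ 0)
    (h : ∀ n, c * a n ≤ r ^ (n + K)) : L ≤ r := by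
  rcases eq_or_ne r ∞ with rfl | hr
  · exact le_top
  -- `min c 1` and `max _ 1` are finite and nonzero, as `tendsto_mul_pow_rpow_inv` needs
  set c' := min c 1
  have hc'0 : c' ≠ 0 := by simp [c', hc]
  have hc't : c' ≠ ∞ := ne_top_of_le_ne_top one_ne_top (min_le_right _ _)
  set C := max (c'⁻¹ * r ^ K) 1
  have hbound : ∀ n, a n ≤ C * r ^ n := fun n =>
    calc a n = c'⁻¹ * (c' * a n) := (ENNReal.inv_mul_cancel_left hc'0 hc't).symm
      _ ≤ c'⁻¹ * r ^ (n + K) := by gcongr; exact (mul_le_mul_left (min_le_left _ _) _).trans (h n)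
      _ = c'⁻¹ * r ^ K * r ^ n := by ring
      _ ≤ C * r ^ n := by gcongr; exact le_max_left _ _
  have hCt : C ≠ ∞ := max_ne_top (mul_ne_top (inv_ne_top.2 hc'0) (pow_ne_top hr)) one_ne_top
  exact le_of_tendsto_of_tendsto' hlim
    (tendsto_mul_pow_rpow_inv (one_pos.trans_le (le_max_right _ _)).ne' hCt r)
    fun n => ENNReal.rpow_le_rpow (hbound n) (by positivity)

theorem le_liminf_rpow_inv_of_mul_pow_le {a : ℕ → ℝ≥0∞} {r c : ℝ≥0∞} (hc : c ≠ 0)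
    (h : ∀ᶠ n in atTop, c * r ^ n ≤ a n) :
    r ≤ liminf (fun n : ℕ => a n ^ (n : ℝ)⁻¹) atTop := by
  set c' := min c 1
  have hc'0 : c' ≠ 0 := by simp [c', hc]
  have hc't : c' ≠ ∞ := ne_top_of_le_ne_top one_ne_top (min_le_right _ _)
  rw [← (tendsto_mul_pow_rpow_inv hc'0 hc't r).liminf_eq]
  refine liminf_le_liminf (h.mono fun n hn => ?_)
  exact ENNReal.rpow_le_rpow ((mul_le_mul_left (min_le_left _ _) _).trans hn) (by positivity)

theorem exists_mul_pow_le_of_supermultiplicative {a : ℕ → ℝ≥0∞}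
    (hmul : ∀ m n, a m * a n ≤ a (m + n)) {N : ℕ} (hpos : ∀ n ≥ N, a n ≠ 0)
    {k : ℕ} (hk : 1 ≤ k) {t : ℝ≥0∞} (ht : t ≠ ∞) (htk : t ^ k ≤ a k) :
    ∃ c ≠ 0, ∀ n ≥ N, c * t ^ n ≤ a n := by
  -- the bound holds on the window `[N, N + k)` by the choice of `c`, and `a (n - k) ↦ a n`
  -- multiplies the left side by `t ^ k ≤ a k`
  set c := (Finset.Ico N (N + k)).inf fun s => a s / t ^ s
  have hc : c ≠ 0 := by
    refine (Finset.lt_inf_iff zero_lt_top).2 (fun s hs => ?_) |>.ne'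
    exact ENNReal.div_pos (hpos s (Finset.mem_Ico.1 hs).1) (pow_ne_top ht)
  refine ⟨c, hc, fun n hn => ?_⟩
  induction n using Nat.strong_induction_on with
  | _ n ih =>
    by_cases hnk : n < N + k
    · have hcn : c ≤ a n / t ^ n := Finset.inf_le (Finset.mem_Ico.2 ⟨hn, hnk⟩)
      exact (ENNReal.le_div_iff_mul_le (Or.inr (hpos n hn)) (Or.inl (pow_ne_top ht))).1 hcn
    · calc c * t ^ n = t ^ k * (c * t ^ (n - k)) := by
            rw [mul_left_comm, ← pow_add, Nat.add_sub_cancel' (by omega)]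
        _ ≤ a k * a (n - k) := by gcongr; exact ih _ (by omega) (by omega)
        _ ≤ a n := by simpa [Nat.add_sub_cancel' (show k ≤ n by omega)] using hmul k (n - k)

theorem tendsto_rpow_inv_of_supermultiplicative {a : ℕ → ℝ≥0∞}
    (hmul : ∀ m n, a m * a n ≤ a (m + n)) (hpos : ∀ᶠ n in atTop, a n ≠ 0) :
    Tendsto (fun n : ℕ => a n ^ (n : ℝ)⁻¹) atTop (𝓝 (⨆ k ≥ 1, a k ^ (k : ℝ)⁻¹)) := by
  obtain ⟨N, hN⟩ := eventually_atTop.1 hpos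
  refine tendsto_of_le_liminf_of_limsup_le ?_ ?_
  · refine iSup₂_le fun k hk => le_of_forall_lt_imp_le_of_dense fun t ht => ?_
    have hk' : (0 : ℝ) < k := by exact_mod_cast hk
    have htk : t ^ k < a k := by
      simpa [ENNReal.rpow_natCast] using (ENNReal.lt_rpow_inv_iff hk').1 ht
    obtain ⟨c, hc, hct⟩ := exists_mul_pow_le_of_supermultiplicative hmul hN hk
      (ne_top_of_lt ht) htk.le
    exact le_liminf_rpow_inv_of_mul_pow_le hc (eventually_atTop.2 ⟨N, hct⟩)
  · refine limsup_le_of_le ?_ ?_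
    · isBoundedDefault
    filter_upwards [eventually_ge_atTop 1] with n hn
    exact le_iSup₂ (f := fun k (_ : k ≥ 1) => a k ^ (k : ℝ)⁻¹) n hn

theorem le_iSup_rpow_inv_pow (a : ℕ → ℝ≥0∞) {m : ℕ} (hm : 1 ≤ m) :
    a m ≤ (⨆ k ≥ 1, a k ^ (k : ℝ)⁻¹) ^ m := by
  have hm' : (0 : ℝ) < m := by exact_mod_cast hm
  rw [← ENNReal.rpow_natCast, ← ENNReal.rpow_inv_le_iff hm']
  exact le_iSup₂ (f := fun k (_ : k ≥ 1) => a k ^ (k : ℝ)⁻¹) m hm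

end ENNReal

theorem Nat.eventually_mem_of_setGcd_eq_one {M : AddSubmonoid ℕ} (h : Nat.setGcd M = 1) :
    ∀ᶠ n in atTop, n ∈ M := by
  obtain ⟨N, hN⟩ := Nat.exists_mem_closure_of_ge (M : Set ℕ)
  exact eventually_atTop.2 ⟨N, fun n hn => by
    simpa using hN n hn (h ▸ one_dvd n)⟩

section matPow

variable [DecidableEq S] (A : S → S → ℝ≥0∞)

theorem matPow_add (m n : ℕ) (x y : S) :
    matPow A (m + n) x y = ∑' z, matPow A m x z * matPow A n z y := by
  induction n generalizing y with
  | zero =>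
    simp only [Nat.add_zero, matPow, mul_ite, mul_one, mul_zero]
    exact (tsum_ite_eq y _).symm
  | succ n ih =>
    calc matPow A (m + n + 1) x y
        = ∑' z, ∑' w, matPow A m x w * (matPow A n w z * A z y) := by
          simp only [matPow, ih, ← ENNReal.tsum_mul_right, mul_assoc]
      _ = ∑' w, matPow A m x w * matPow A (n + 1) w y := by
          rw [ENNReal.tsum_comm]
          simp only [matPow, ENNReal.tsum_mul_left]

theorem matPow_mul_le (m n : ℕ) (x y z : S) :
    matPow A m x z * matPow A n z y ≤ matPow A (m + n) x y := by
  rw [matPow_add]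
  exact ENNReal.le_tsum z

theorem matPow_mul_mul_le (l m n : ℕ) (x y z w : S) :
    matPow A l x y * matPow A m y z * matPow A n z w ≤ matPow A (l + m + n) x w :=
  (mul_le_mul_left (matPow_mul_le A l m x z y) _).trans (matPow_mul_le A (l + m) n x w z)

def returnTimes (x : S) : AddSubmonoid ℕ where
  carrier := {n | matPow A n x x ≠ 0}
  zero_mem' := by simp [matPow]
  add_mem' {m n} hm hn :=
    ne_bot_of_le_ne_bot (mul_ne_zero hm hn) (matPow_mul_le A m n x x x)

theorem setGcd_returnTimes_dvd {x y : S} {s t : ℕ} (hs : matPow A s x y ≠ 0)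
    (ht : matPow A t y x ≠ 0) {n : ℕ} (hn : n ∈ returnTimes A y) :
    Nat.setGcd (returnTimes A x) ∣ n := by
  have hst : s + t ∈ returnTimes A x :=
    ne_bot_of_le_ne_bot (mul_ne_zero hs ht) (matPow_mul_le A s t x x y)
  have hsnt : s + n + t ∈ returnTimes A x :=
    ne_bot_of_le_ne_bot (mul_ne_zero (mul_ne_zero hs hn) ht) (matPow_mul_mul_le A s n t x y y x)
  have := Nat.dvd_sub (Nat.setGcd_dvd_of_mem hsnt) (Nat.setGcd_dvd_of_mem hst)
  rwa [show s + n + t - (s + t) = n by omega] at this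

end matPow

theorem spectral_radius_exists_general [DecidableEq S] (A : S → S → ℝ≥0∞)
    (hirr : ∀ x y : S, ∃ n, 1 ≤ n ∧ 0 < matPow A n x y)
    (haper : ∃ x : S, ∀ d : ℕ, (∀ n, 1 ≤ n → 0 < matPow A n x x → d ∣ n) → d = 1) :
    ∃ r : ℝ≥0∞, 0 < r ∧ ∀ x : S,
      Tendsto (fun n : ℕ => (matPow A n x x) ^ ((n : ℝ)⁻¹)) atTop (nhds r) := by
  obtain ⟨x₀, hx₀⟩ := haper
  set R : S → ℝ≥0∞ := fun x => ⨆ k ≥ 1, matPow A k x x ^ (k : ℝ)⁻¹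
  have hlim : ∀ x, Tendsto (fun n : ℕ => matPow A n x x ^ (n : ℝ)⁻¹) atTop (𝓝 (R x)) := by
    intro x
    obtain ⟨s, -, hs⟩ := hirr x x₀
    obtain ⟨t, -, ht⟩ := hirr x₀ x
    have hgcd : Nat.setGcd (returnTimes A x) = 1 :=
      hx₀ _ fun n _ hn => setGcd_returnTimes_dvd A hs.ne' ht.ne' hn.ne'
    exact ENNReal.tendsto_rpow_inv_of_supermultiplicative (fun m n => matPow_mul_le A m n x x x)
      (Nat.eventually_mem_of_setGcd_eq_one hgcd)
  have hle : ∀ x y, R x ≤ R y := by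
    intro x y
    obtain ⟨s, hs₁, hs⟩ := hirr y x
    obtain ⟨t, -, ht⟩ := hirr x y
    refine ENNReal.le_of_tendsto_rpow_inv_of_mul_le_pow (s + t) (hlim x)
      (mul_ne_zero hs.ne' ht.ne') fun n => ?_
    calc matPow A s y x * matPow A t x y * matPow A n x x
        = matPow A s y x * matPow A n x x * matPow A t x y := mul_right_comm _ _ _
      _ ≤ matPow A (s + n + t) y y := matPow_mul_mul_le A s n t y x x y
      _ ≤ R y ^ (s + n + t) := ENNReal.le_iSup_rpow_inv_pow _ (by omega)
      _ = R y ^ (n + (s + t)) := by ring_nf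
  have hpos : 0 < R x₀ := by
    obtain ⟨n, hn, hn₀⟩ := hirr x₀ x₀
    have hRn : 0 < R x₀ ^ n := hn₀.trans_le (ENNReal.le_iSup_rpow_inv_pow _ hn)
    exact pos_iff_ne_zero.2 ((pow_ne_zero_iff (by omega)).1 hRn.ne')
  exact ⟨R x₀, hpos, fun x => le_antisymm (hle x x₀) (hle x₀ x) ▸ hlim x⟩

theorem spectral_radius_exists [Countable S] [DecidableEq S] (A : S → S → ℝ≥0∞)
    (hfin : ∀ x y, A x y ≠ ⊤)
    (hirr : ∀ x y : S, ∃ n, 1 ≤ n ∧ 0 < matPow A n x y)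
    (haper : ∃ x : S, ∀ d : ℕ, (∀ n, 1 ≤ n → 0 < matPow A n x x → d ∣ n) → d = 1) :
    ∃ r : ℝ≥0∞, 0 < r ∧ ∀ x : S,
      Tendsto (fun n : ℕ => (matPow A n x x) ^ ((n : ℝ)⁻¹)) atTop (nhds r) :=
  spectral_radius_exists_general A hirr haper
end

section
/- Let μ be a nonzero Borel measure on ℝ, ψ(λ) := log ∫ e^{λx} μ(dx), and U := interior of {λ : ψ(λ) < ∞}. Then ψ is differentiable on U and for λ ∈ U, ψ'(λ) = ∫ x μ_λ(dx), where μ_λ(dx) := e^{λx − ψ(λ)} μ(dx) is a probability measure (the mean of the tilted measure). -/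
/-!
`ψ` is Mathlib's cumulant generating function `cgf id μ`, the effective domain is
`integrableExpSet id μ`, and `μ_λ` is `μ.tilted (λ * ·)`. On the interior of the domain,
`∫ e^{λx} dμ` may be differentiated under the integral sign (near `λ` the integrands are dominated
by `e^{ax} + e^{bx}` for `a < λ < b` in the domain), so `ψ'(λ) = ∫ x e^{λx} dμ / ∫ e^{λx} dμ`,
which is the mean of `μ_λ`.
-/

open scoped ENNReal
open MeasureTheory ProbabilityTheory Real

/-- The moment generating function `Φ(λ) = ∫ e^{λx} μ(dx) ∈ [0,∞]`. -/
noncomputable def mgf' (μ : Measure ℝ) (lam : ℝ) : ℝ≥0∞ :=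
  ∫⁻ x, ENNReal.ofReal (Real.exp (lam * x)) ∂μ

/-- The logarithmic moment generating function `ψ(λ) = log Φ(λ)`, valued in `[-∞,∞]`
(with `log ∞ := ∞`). -/
noncomputable def logMgf (μ : Measure ℝ) (lam : ℝ) : EReal :=
  ENNReal.log (mgf' μ lam)

/-- `ψ` as a real-valued function (meaningful on the effective domain where `Φ` is finite). -/
noncomputable def logMgfReal (μ : Measure ℝ) (lam : ℝ) : ℝ :=
  Real.log (mgf' μ lam).toReal

/-- The exponentially tilted measure `μ_λ(dx) = e^{λx - ψ(λ)} μ(dx)`. -/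
noncomputable def tilted' (μ : Measure ℝ) (lam : ℝ) : Measure ℝ :=
  μ.withDensity (fun x => ENNReal.ofReal (Real.exp (lam * x - logMgfReal μ lam)))

section

variable {μ : Measure ℝ} {t : ℝ}

lemma aestronglyMeasurable_exp_mul :
    AEStronglyMeasurable (fun x => exp (t * x)) μ :=
  (measurable_const_mul t).exp.aestronglyMeasurable

lemma mgf'_ne_top_iff : mgf' μ t ≠ ⊤ ↔ Integrable (fun x => exp (t * x)) μ :=
  lintegral_ofReal_ne_top_iff_integrable aestronglyMeasurable_exp_mul
    (ae_of_all _ fun _ => (exp_pos _).le)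

lemma setOf_mgf'_ne_top (μ : Measure ℝ) : {l | mgf' μ l ≠ ⊤} = integrableExpSet id μ :=
  Set.ext fun _ => mgf'_ne_top_iff

lemma toReal_mgf' : (mgf' μ t).toReal = mgf id μ t :=
  (integral_eq_lintegral_of_nonneg_ae (ae_of_all _ fun _ => (exp_pos _).le)
    aestronglyMeasurable_exp_mul).symm

lemma logMgfReal_eq_cgf (μ : Measure ℝ) : logMgfReal μ = cgf id μ :=
  funext fun _ => congrArg Real.log toReal_mgf'

lemma tilted'_eq_tilted (ht : Integrable (fun x => exp (t * x)) μ) :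
    tilted' μ t = μ.tilted (t * ·) := by
  rcases eq_zero_or_neZero μ with rfl | hμ
  · simp [tilted']
  · have hmgf : exp (cgf id μ t) = mgf id μ t := exp_cgf (X := id) ht
    simp_rw [tilted', Measure.tilted, exp_sub, logMgfReal_eq_cgf, hmgf, mgf, id]

end

theorem logMgf_hasDerivAt_mean_tilted (μ : Measure ℝ) (hμ : μ ≠ 0) (lam : ℝ)
    (hlam : lam ∈ interior {l : ℝ | mgf' μ l ≠ ⊤}) :
    IsProbabilityMeasure (tilted' μ lam) ∧
    HasDerivAt (logMgfReal μ) (∫ x, x ∂(tilted' μ lam)) lam := by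
  have : NeZero μ := ⟨hμ⟩
  rw [setOf_mgf'_ne_top] at hlam
  have hint : Integrable (fun x => exp (lam * x)) μ :=
    interior_subset (s := integrableExpSet id μ) hlam
  rw [tilted'_eq_tilted hint, logMgfReal_eq_cgf]
  refine ⟨isProbabilityMeasure_tilted hint, ?_⟩
  have hmean : ∫ x, x ∂(μ.tilted (lam * ·)) = deriv (cgf id μ) lam :=
    integral_tilted_mul_self (X := id) hlam
  exact hmean ▸ (analyticAt_cgf hlam).differentiableAt.hasDerivAt
end

section
/- Let A be an irreducible nonnegative matrix on countable S with ρ(A) < ∞, and set λ* := −log ρ(A). Fix z ∈ S and let ψ_z be the excursion logarithmic moment generating function at z. If A is R-transient, i.e., Σ_{n≥1} ρ(A)^{-n} A^n(z,z) < ∞, then ψ_z(λ*) < 0. If A is R-recurrent, i.e., Σ_{n≥1} ρ(A)^{-n} A^n(z,z) = ∞, then ψ_z(λ*) = 0. -/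
open scoped ENNReal
open Filter

variable {S : Type*}

/-- Weight of a walk, given as the list of its successive vertices:
the product of the matrix entries along consecutive pairs. -/
noncomputable def chainWeight (A : S → S → ℝ≥0∞) : List S → ℝ≥0∞
  | [] => 1
  | [_] => 1
  | a :: b :: t => A a b * chainWeight A (b :: t)

/-- Excursions away from `z`: walks `z :: l ++ [z]` of length `l.length + 1 ≥ 1`
from `z` to `z` (through edges of the graph of `A`) avoiding `z` at intermediate times.
An excursion is encoded by the list `l` of its intermediate vertices. -/
def ExcAvoid (A : S → S → ℝ≥0∞) (z : S) : Set (List S) :=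
  {l | List.Chain (fun a b => 0 < A a b) z (l ++ [z]) ∧ ∀ v ∈ l, v ≠ z}

/-- The moment generating function `φ_z(λ) = Σ_{ω excursion away from z} e^{λ ℓ(ω)} 𝒜(ω)`. -/
noncomputable def phiz (A : S → S → ℝ≥0∞) (z : S) (lam : ℝ) : ℝ≥0∞ :=
  ∑' l : ExcAvoid A z,
    ENNReal.ofReal (Real.exp (lam * (l.1.length + 1))) * chainWeight A (z :: (l.1 ++ [z]))

/-!
Cutting the walk `z :: l ++ [z]` at its intermediate visits to `z` splits it uniquely into
excursions, and the walk weight discounted by `t` per step is multiplicative under this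
splitting. With `F(t)` the discounted total weight of the excursions, this gives the renewal
identity `∑ₙ tⁿ⁺¹ Aⁿ⁺¹(z,z) = F(t) ∑ₖ F(t)ᵏ = F(t) / (1 - F(t))`, finite iff `F(t) < 1`;
and `F(ρ⁻¹) = φ_z(λ*) = exp ψ_z(λ*)`.

It remains to see `F(ρ⁻¹) ≤ 1`. For `t < ρ⁻¹` the root test makes the tails of the series
finite, whereas `F(t) ≥ 1` makes all of them infinite, since a walk made of `k + 1` excursions
has length at least `k`. (Tails, because the root test says nothing about the first terms,
which might be infinite.) So `F < 1` on `[0, ρ⁻¹)`, and `F` is lower semicontinuous.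
-/

open Topology

section Lists

variable {α : Type*}

def lengthEqSuccEquiv (n : ℕ) :
    {l : List α // l.length = n} × α ≃ {l : List α // l.length = n + 1} where
  toFun p := ⟨p.1.1 ++ [p.2], by simp [p.1.2]⟩
  invFun l :=
    (⟨l.1.dropLast, by simp [l.2]⟩, l.1.getLast (List.ne_nil_of_length_eq_add_one l.2))
  left_inv p := by ext <;> simp
  right_inv l := Subtype.ext (List.dropLast_append_getLast _)

lemma tsum_length_eq_zero (f : List α → ℝ≥0∞) :
    ∑' l : {l : List α // l.length = 0}, f l = f [] :=
  tsum_eq_single (⟨[], rfl⟩ : {l : List α // l.length = 0}) fun l hl =>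
    absurd (Subtype.ext (List.length_eq_zero_iff.mp l.2)) hl

lemma tsum_length_eq_succ (f : List α → ℝ≥0∞) (n : ℕ) :
    ∑' l : {l : List α // l.length = n + 1}, f l
      = ∑' l : {l : List α // l.length = n}, ∑' a, f (l.1 ++ [a]) := by
  rw [← (lengthEqSuccEquiv n).tsum_eq, ENNReal.tsum_prod']
  rfl

lemma tsum_eq_tsum_length (f : List α → ℝ≥0∞) :
    ∑' l, f l = ∑' n, ∑' l : {l : List α // l.length = n}, f l := by
  rw [← (Equiv.sigmaFiberEquiv List.length).tsum_eq f]
  exact ENNReal.tsum_sigma' _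

lemma tsum_length_eq_prod_map (g : α → ℝ≥0∞) :
    ∀ k, ∑' L : {L : List α // L.length = k}, (L.1.map g).prod = (∑' a, g a) ^ k
  | 0 => by simp [tsum_length_eq_zero (fun L => (L.map g).prod)]
  | k + 1 => by
    rw [tsum_length_eq_succ (fun L => (L.map g).prod), pow_succ, ← tsum_length_eq_prod_map g k,
      ← ENNReal.tsum_mul_right]
    refine tsum_congr fun L => ?_
    simp [ENNReal.tsum_mul_left]

lemma tsum_mul_prod_map (f : ℕ → ℝ≥0∞) (g : α → ℝ≥0∞) :
    ∑' L : List α, f L.length * (L.map g).prod = ∑' k, f k * (∑' a, g a) ^ k := by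
  rw [tsum_eq_tsum_length]
  congr 1 with k
  rw [← tsum_length_eq_prod_map, ← ENNReal.tsum_mul_left]
  exact tsum_congr fun L => by rw [L.2]

end Lists

section Walks

variable (A : S → S → ℝ≥0∞)

lemma chainWeight_append (a : S) (q : List S) :
    ∀ p : List S, chainWeight A (p ++ a :: q) = chainWeight A (p ++ [a]) * chainWeight A (a :: q)
  | [] => by simp [chainWeight]
  | [x] => by simp [chainWeight]
  | x :: y :: p => by
    simp only [List.cons_append, chainWeight] at *
    rw [← List.cons_append, chainWeight_append a q (y :: p), mul_assoc]
    rfl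

lemma chainWeight_ne_top (hfin : ∀ x y, A x y ≠ ⊤) : ∀ l : List S, chainWeight A l ≠ ⊤
  | [] | [_] => by simp [chainWeight]
  | a :: b :: t => ENNReal.mul_ne_top (hfin a b) (chainWeight_ne_top hfin (b :: t))

lemma isChain_pos_of_chainWeight_ne_zero :
    ∀ l : List S, chainWeight A l ≠ 0 → l.IsChain (fun x y => 0 < A x y)
  | [], _ => .nil
  | [a], _ => .singleton a
  | a :: b :: t, h => by
    rw [chainWeight, mul_ne_zero_iff] at h
    exact .cons_cons (pos_iff_ne_zero.mpr h.1) (isChain_pos_of_chainWeight_ne_zero (b :: t) h.2)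

variable [DecidableEq S]

lemma matPow_succ_eq_tsum_chainWeight (x y : S) :
    ∀ n : ℕ, matPow A (n + 1) x y
      = ∑' l : {l : List S // l.length = n}, chainWeight A (x :: (l.1 ++ [y]))
  | 0 => by
    rw [tsum_length_eq_zero (fun l => chainWeight A (x :: (l ++ [y])))]
    show ∑' w, matPow A 0 x w * A w y = _
    rw [tsum_eq_single x (fun w hw => by simp [matPow, Ne.symm hw])]
    simp [matPow, chainWeight]
  | n + 1 => by
    rw [matPow, tsum_length_eq_succ (fun l => chainWeight A (x :: (l ++ [y]))),
      ENNReal.tsum_comm]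
    refine tsum_congr fun w => ?_
    rw [matPow_succ_eq_tsum_chainWeight x w n, ← ENNReal.tsum_mul_right]
    refine tsum_congr fun l => ?_
    have h := chainWeight_append A w [y] (x :: l.1)
    simp only [List.cons_append, List.append_assoc, List.nil_append] at h ⊢
    rw [h]
    simp [chainWeight]

lemma tsum_mul_chainWeight (f : ℕ → ℝ≥0∞) (x y : S) :
    ∑' l : List S, f l.length * chainWeight A (x :: (l ++ [y]))
      = ∑' n, f n * matPow A (n + 1) x y := by
  rw [tsum_eq_tsum_length]
  congr 1 with n
  rw [matPow_succ_eq_tsum_chainWeight, ← ENNReal.tsum_mul_left]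
  exact tsum_congr fun l => by rw [l.2]

end Walks

section Excursions

variable (z : S)

def joinExcursions (p : {l : List S // z ∉ l} × List {l : List S // z ∉ l}) : List S :=
  [z].intercalate (p.1.1 :: p.2.map Subtype.val)

lemma joinExcursions_cons (B B' : {l : List S // z ∉ l}) (L : List {l : List S // z ∉ l}) :
    joinExcursions z (B, B' :: L) = B.1 ++ z :: joinExcursions z (B', L) := by
  simp [joinExcursions]

lemma joinExcursions_surjective : Function.Surjective (joinExcursions z) := by
  intro l
  induction l with
  | nil => exact ⟨(⟨[], List.not_mem_nil⟩, []), rfl⟩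
  | cons x l ih =>
    obtain ⟨⟨B, L⟩, rfl⟩ := ih
    by_cases hx : x = z
    · subst hx
      exact ⟨(⟨[], List.not_mem_nil⟩, B :: L), by simp [joinExcursions_cons]⟩
    · exact ⟨(⟨x :: B.1, by simp [Ne.symm hx, B.2]⟩, L), by simp [joinExcursions]⟩

lemma length_le_length_joinExcursions :
    ∀ p : {l : List S // z ∉ l} × List {l : List S // z ∉ l},
      p.2.length ≤ (joinExcursions z p).length
  | (_, []) => Nat.zero_le _
  | (B, B' :: L) => by
    have := length_le_length_joinExcursions (B', L)
    rw [joinExcursions_cons]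
    simp only [List.length_cons, List.length_append] at this ⊢
    omega

variable [DecidableEq S]

lemma joinExcursions_injective : Function.Injective (joinExcursions z) := by
  have hfree (B : {l : List S // z ∉ l}) (L : List {l : List S // z ∉ l}) :
      ∀ l ∈ B.1 :: L.map Subtype.val, z ∉ l := by
    simp only [List.mem_cons, List.mem_map]
    rintro l (rfl | ⟨B', -, rfl⟩)
    exacts [B.2, B'.2]
  rintro ⟨B, L⟩ ⟨B', L'⟩ h
  have hsplit := congrArg (List.splitOn z) h
  simp only [joinExcursions] at hsplit
  rw [List.splitOn_intercalate z (hfree B L) (List.cons_ne_nil _ _),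
    List.splitOn_intercalate z (hfree B' L') (List.cons_ne_nil _ _)] at hsplit
  obtain ⟨hB, hL⟩ := List.cons_eq_cons.mp hsplit
  exact Prod.ext (Subtype.ext hB) (List.map_injective_iff.mpr Subtype.val_injective hL)

noncomputable def excursionDecomposition :
    ({l : List S // z ∉ l} × List {l : List S // z ∉ l}) ≃ List S :=
  Equiv.ofBijective _ ⟨joinExcursions_injective z, joinExcursions_surjective z⟩

end Excursions

section Loops

variable (A : S → S → ℝ≥0∞) (z : S) (t : ℝ≥0∞)

noncomputable def loopWeight (l : List S) : ℝ≥0∞ :=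
  t ^ (l.length + 1) * chainWeight A (z :: (l ++ [z]))

noncomputable def excursionSum : ℝ≥0∞ :=
  ∑' B : {l : List S // z ∉ l}, loopWeight A z t B

lemma loopWeight_append_cons (l m : List S) :
    loopWeight A z t (l ++ z :: m) = loopWeight A z t l * loopWeight A z t m := by
  have h := chainWeight_append A z (m ++ [z]) (z :: l)
  simp only [List.cons_append] at h
  simp only [loopWeight, List.length_append, List.length_cons, List.append_assoc,
    List.cons_append, h]
  ring

lemma loopWeight_joinExcursions :
    ∀ (B : {l : List S // z ∉ l}) (L : List {l : List S // z ∉ l}),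
      loopWeight A z t (joinExcursions z (B, L))
        = loopWeight A z t B * (L.map fun B' => loopWeight A z t B'.1).prod
  | B, [] => by simp [joinExcursions]
  | B, B' :: L => by
    rw [joinExcursions_cons, loopWeight_append_cons, loopWeight_joinExcursions B' L]
    simp

lemma tsum_mul_loopWeight_joinExcursions (f : ℕ → ℝ≥0∞) :
    ∑' p, f p.2.length * loopWeight A z t (joinExcursions z p)
      = excursionSum A z t * ∑' k, f k * excursionSum A z t ^ k := by
  rw [ENNReal.tsum_prod', excursionSum, ← ENNReal.tsum_mul_right]
  refine tsum_congr fun B => ?_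
  rw [← tsum_mul_prod_map, ← ENNReal.tsum_mul_left]
  refine tsum_congr fun L => ?_
  rw [loopWeight_joinExcursions]
  ring

variable [DecidableEq S]

lemma tsum_mul_loopWeight (f : ℕ → ℝ≥0∞) :
    ∑' l, f l.length * loopWeight A z t l
      = ∑' n, f n * (t ^ (n + 1) * matPow A (n + 1) z z) := by
  simp only [loopWeight, ← mul_assoc]
  exact tsum_mul_chainWeight A (fun n => f n * t ^ (n + 1)) z z

theorem tsum_matPow_eq_excursionSum :
    ∑' n, t ^ (n + 1) * matPow A (n + 1) z z
      = excursionSum A z t * (1 - excursionSum A z t)⁻¹ := by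
  have hpath := tsum_mul_loopWeight A z t 1
  have hrenewal := tsum_mul_loopWeight_joinExcursions A z t 1
  simp only [Pi.one_apply, one_mul] at hpath hrenewal
  rw [← hpath, ← (excursionDecomposition z).tsum_eq, ← ENNReal.tsum_geometric]
  exact hrenewal

theorem tsum_matPow_ne_top_iff :
    ∑' n, t ^ (n + 1) * matPow A (n + 1) z z ≠ ⊤ ↔ excursionSum A z t < 1 := by
  rw [tsum_matPow_eq_excursionSum]
  constructor
  · intro h
    by_contra! hF
    exact h (by rw [tsub_eq_zero_of_le hF, ENNReal.inv_zero, ENNReal.mul_top (by positivity)])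
  · intro hF
    exact ENNReal.mul_ne_top hF.ne_top (ENNReal.inv_ne_top.mpr (tsub_pos_of_lt hF).ne')

theorem tsum_tail_matPow_eq_top (hF : 1 ≤ excursionSum A z t) (N : ℕ) :
    ∑' n, (if N ≤ n then t ^ (n + 1) * matPow A (n + 1) z z else 0) = ⊤ := by
  set F := excursionSum A z t
  set f : ℕ → ℝ≥0∞ := fun n => if N ≤ n then 1 else 0
  have hmono : Monotone f := fun m n hmn => by
    dsimp only [f]
    split_ifs with hm hn
    exacts [le_rfl, absurd (hm.trans hmn) hn, zero_le_one, le_rfl]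
  have hgeom : ∑' k, f k * F ^ k = ⊤ := by
    refine top_unique ?_
    calc (⊤ : ℝ≥0∞) = ∑' _ : ℕ, 1 := (ENNReal.tsum_const_eq_top_of_ne_zero one_ne_zero).symm
      _ ≤ ∑' k, f (k + N) * F ^ (k + N) :=
        ENNReal.tsum_le_tsum fun k => by simpa [f] using one_le_pow₀ hF
      _ ≤ ∑' k, f k * F ^ k :=
        ENNReal.tsum_comp_le_tsum_of_injective (add_left_injective N) fun k => f k * F ^ k
  refine top_unique ?_
  calc (⊤ : ℝ≥0∞) = F * ∑' k, f k * F ^ k := by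
        rw [hgeom, ENNReal.mul_top (by positivity)]
    _ = ∑' p, f p.2.length * loopWeight A z t (joinExcursions z p) :=
        (tsum_mul_loopWeight_joinExcursions A z t f).symm
    _ ≤ ∑' p, f (joinExcursions z p).length * loopWeight A z t (joinExcursions z p) :=
        ENNReal.tsum_le_tsum fun p =>
          mul_le_mul_left (hmono (length_le_length_joinExcursions z p)) _
    _ = ∑' l, f l.length * loopWeight A z t l :=
        (excursionDecomposition z).tsum_eq fun l => f l.length * loopWeight A z t l
    _ = _ := by
        rw [tsum_mul_loopWeight]
        simp only [f, ite_mul, one_mul, zero_mul]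

end Loops


lemma eventually_le_pow_of_tendsto_rpow_inv {a : ℕ → ℝ≥0∞} {ρ r : ℝ≥0∞}
    (ha : Tendsto (fun n : ℕ => a n ^ ((n : ℝ)⁻¹)) (atTop ⊓ 𝓟 {n | 0 < a n}) (𝓝 ρ))
    (hr : ρ < r) : ∀ᶠ n in atTop, a n ≤ r ^ n := by
  have h := ha.eventually (gt_mem_nhds hr)
  rw [eventually_inf_principal] at h
  filter_upwards [h, eventually_gt_atTop 0] with n hn hn0
  rcases eq_zero_or_pos (a n) with h0 | hpos
  · simp [h0]
  · simpa using (ENNReal.rpow_inv_le_iff (by positivity)).mp (hn hpos).le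

lemma exists_tsum_tail_ne_top_of_lt_inv {a : ℕ → ℝ≥0∞} {ρ s : ℝ≥0∞}
    (ha : Tendsto (fun n : ℕ => a n ^ ((n : ℝ)⁻¹)) (atTop ⊓ 𝓟 {n | 0 < a n}) (𝓝 ρ))
    (hs : s < ρ⁻¹) : ∃ N, ∑' n, (if N ≤ n then s ^ (n + 1) * a (n + 1) else 0) ≠ ⊤ := by
  obtain ⟨r, hρr, hrs⟩ := exists_between (ENNReal.lt_inv_iff_lt_inv.mp hs)
  have hq : s * r < 1 := ENNReal.mul_lt_of_lt_div' (by rwa [one_div])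
  obtain ⟨N, hN⟩ := (eventually_le_pow_of_tendsto_rpow_inv ha hρr).exists_forall_of_atTop
  refine ⟨N, ne_top_of_le_ne_top (b := ∑' n, (s * r) ^ n) ?_ (ENNReal.tsum_le_tsum fun n => ?_)⟩
  · rw [ENNReal.tsum_geometric]
    exact ENNReal.inv_ne_top.mpr (tsub_pos_of_lt hq).ne'
  · split_ifs with hn
    · calc s ^ (n + 1) * a (n + 1) ≤ s ^ (n + 1) * r ^ (n + 1) := by
            gcongr
            exact hN _ (by omega)
        _ = (s * r) ^ (n + 1) := (mul_pow s r _).symm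
        _ ≤ (s * r) ^ n := pow_le_pow_of_le_one zero_le hq.le n.le_succ
    · exact zero_le

section Criticality

variable (A : S → S → ℝ≥0∞) (z : S)

lemma lowerSemicontinuous_excursionSum (hfin : ∀ x y, A x y ≠ ⊤) :
    LowerSemicontinuous (excursionSum A z) :=
  lowerSemicontinuous_tsum fun _ =>
    ((ENNReal.continuous_mul_const (chainWeight_ne_top A hfin _)).comp
      (ENNReal.continuous_pow _)).lowerSemicontinuous

variable [DecidableEq S]

lemma excursionSum_lt_one_of_lt_inv {ρ s : ℝ≥0∞}
    (hρ : Tendsto (fun n : ℕ => (matPow A n z z) ^ ((n : ℝ)⁻¹))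
      (atTop ⊓ 𝓟 {n : ℕ | 0 < matPow A n z z}) (𝓝 ρ))
    (hs : s < ρ⁻¹) : excursionSum A z s < 1 := by
  obtain ⟨N, hN⟩ := exists_tsum_tail_ne_top_of_lt_inv hρ hs
  by_contra! hF
  exact hN (tsum_tail_matPow_eq_top A z s hF N)

lemma excursionSum_inv_le_one (hfin : ∀ x y, A x y ≠ ⊤) {ρ : ℝ≥0∞} (hρT : ρ ≠ ⊤)
    (hρ : Tendsto (fun n : ℕ => (matPow A n z z) ^ ((n : ℝ)⁻¹))
      (atTop ⊓ 𝓟 {n : ℕ | 0 < matPow A n z z}) (𝓝 ρ)) :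
    excursionSum A z ρ⁻¹ ≤ 1 := by
  have hsub : Set.Iio ρ⁻¹ ⊆ excursionSum A z ⁻¹' Set.Iic 1 :=
    fun s hs => (excursionSum_lt_one_of_lt_inv A z hρ hs).le
  have hclosure : ρ⁻¹ ∈ closure (Set.Iio ρ⁻¹) := by
    rw [closure_Iio' ⟨0, ENNReal.inv_pos.mpr hρT⟩]
    exact Set.mem_Iic.mpr le_rfl
  exact closure_minimal hsub ((lowerSemicontinuous_excursionSum A z hfin).isClosed_preimage 1)
    hclosure

end Criticality

section MGF

lemma ofReal_exp_neg_log_mul {ρ : ℝ≥0∞} (hρ0 : 0 < ρ) (hρT : ρ ≠ ⊤) (n : ℕ) :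
    ENNReal.ofReal (Real.exp (-Real.log ρ.toReal * (n + 1))) = ρ⁻¹ ^ (n + 1) := by
  have hr : 0 < ρ.toReal := ENNReal.toReal_pos hρ0.ne' hρT
  rw [show -Real.log ρ.toReal * (n + 1) = -(((n + 1 : ℕ) : ℝ) * Real.log ρ.toReal) by
      push_cast; ring,
    Real.exp_neg, Real.exp_nat_mul, Real.exp_log hr, ENNReal.ofReal_inv_of_pos (by positivity),
    ENNReal.ofReal_pow hr.le, ENNReal.ofReal_toReal hρT, ENNReal.inv_pow]

variable (A : S → S → ℝ≥0∞) (z : S)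

lemma indicator_excAvoid_loopWeight (t : ℝ≥0∞) :
    (ExcAvoid A z).indicator (loopWeight A z t) = {l | z ∉ l}.indicator (loopWeight A z t) := by
  ext l
  by_cases hz : z ∈ l
  · rw [Set.indicator_of_notMem (fun h => h.2 z hz rfl), Set.indicator_of_notMem (not_not.mpr hz)]
  by_cases hw : chainWeight A (z :: (l ++ [z])) = 0
  · have h0 : loopWeight A z t l = 0 := by rw [loopWeight, hw, mul_zero]
    rw [Set.indicator_apply_eq_zero.mpr fun _ => h0, Set.indicator_apply_eq_zero.mpr fun _ => h0]
  · have hexc : l ∈ ExcAvoid A z :=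
      ⟨isChain_pos_of_chainWeight_ne_zero A _ hw, fun v hv hvz => hz (hvz ▸ hv)⟩
    rw [Set.indicator_of_mem hexc, Set.indicator_of_mem (show l ∈ {l | z ∉ l} from hz)]

lemma phiz_eq_excursionSum {ρ : ℝ≥0∞} (hρ0 : 0 < ρ) (hρT : ρ ≠ ⊤) :
    phiz A z (-Real.log ρ.toReal) = excursionSum A z ρ⁻¹ := by
  simp only [phiz, ofReal_exp_neg_log_mul hρ0 hρT]
  rw [excursionSum, show (∑' B : {l : List S // z ∉ l}, loopWeight A z ρ⁻¹ B)
      = ∑' l : ({l | z ∉ l} : Set (List S)), loopWeight A z ρ⁻¹ l.1 from rfl,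
    tsum_subtype, ← indicator_excAvoid_loopWeight, ← tsum_subtype]
  rfl

end MGF

theorem excursion_mgf_at_critical_point_general [DecidableEq S]
    (A : S → S → ℝ≥0∞) (hfin : ∀ x y, A x y ≠ ⊤)
    (z : S) (ρ : ℝ≥0∞) (hρ0 : 0 < ρ) (hρT : ρ ≠ ⊤)
    (hρ : ∀ x, Tendsto (fun n : ℕ => (matPow A n x x) ^ ((n : ℝ)⁻¹))
        (atTop ⊓ Filter.principal {n : ℕ | 0 < matPow A n x x}) (nhds ρ)) :
    ((∑' n : ℕ, ρ⁻¹ ^ (n + 1) * matPow A (n + 1) z z) ≠ ⊤ →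
        phiz A z (- Real.log ρ.toReal) < 1) ∧
    ((∑' n : ℕ, ρ⁻¹ ^ (n + 1) * matPow A (n + 1) z z) = ⊤ →
        phiz A z (- Real.log ρ.toReal) = 1) := by
  rw [phiz_eq_excursionSum A z hρ0 hρT]
  refine ⟨(tsum_matPow_ne_top_iff A z ρ⁻¹).mp, fun hG => ?_⟩
  refine le_antisymm (excursionSum_inv_le_one A z hfin hρT (hρ z)) (not_lt.mp fun hlt => ?_)
  exact (tsum_matPow_ne_top_iff A z ρ⁻¹).mpr hlt hG

theorem excursion_mgf_at_critical_point [Countable S] [DecidableEq S]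
    (A : S → S → ℝ≥0∞) (hfin : ∀ x y, A x y ≠ ⊤)
    (hirr : ∀ x y : S, ∃ n, 1 ≤ n ∧ 0 < matPow A n x y)
    (z : S) (ρ : ℝ≥0∞) (hρ0 : 0 < ρ) (hρT : ρ ≠ ⊤)
    (hρ : ∀ x, Tendsto (fun n : ℕ => (matPow A n x x) ^ ((n : ℝ)⁻¹))
        (atTop ⊓ Filter.principal {n : ℕ | 0 < matPow A n x x}) (nhds ρ)) :
    ((∑' n : ℕ, ρ⁻¹ ^ (n + 1) * matPow A (n + 1) z z) ≠ ⊤ →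
        phiz A z (- Real.log ρ.toReal) < 1) ∧
    ((∑' n : ℕ, ρ⁻¹ ^ (n + 1) * matPow A (n + 1) z z) = ⊤ →
        phiz A z (- Real.log ρ.toReal) = 1) :=
  excursion_mgf_at_critical_point_general A hfin z ρ hρ0 hρT hρ
end

section
/- Let A be a nonnegative matrix on countable S with graph G, F a subgraph of G, and z ∈ F ∩ S an isolated vertex of F (no edges of F start or end at z), F' := F \ {z}. Then for all x,y ∈ F' ∩ S and λ ∈ ℝ: φ^{F'}_{x,y}(λ) = φ^F_{x,y}(λ) + Σ_{k≥0} φ^F_{x,z}(λ) · (φ^F_{z,z}(λ))^k · φ^F_{z,y}(λ), as an identity in [0,∞]. -/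
open scoped ENNReal
open Filter

variable {S : Type*}

/-- Excursions away from a subgraph `F = (Fv, Fe)` from `x` to `y`: walks
`x :: l ++ [y]` of length `l.length + 1 ≥ 1` through edges of the graph of `A`,
whose intermediate vertices avoid `Fv`, and which (in case of length 1) do not
jump through an edge of `Fe`.  An excursion is encoded by the list `l` of its
intermediate vertices. -/
def ExcF (A : S → S → ℝ≥0∞) (Fv : Set S) (Fe : Set (S × S)) (x y : S) : Set (List S) :=
  {l | List.Chain (fun a b => 0 < A a b) x (l ++ [y]) ∧ (∀ v ∈ l, v ∉ Fv) ∧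
       (l = [] → (x, y) ∉ Fe)}

/-- The excursion moment generating function
`φ^F_{x,y}(λ) = Σ_{ω excursion away from F from x to y} e^{λ ℓ(ω)} 𝒜(ω)`. -/
noncomputable def phiF (A : S → S → ℝ≥0∞) (Fv : Set S) (Fe : Set (S × S))
    (x y : S) (lam : ℝ) : ℝ≥0∞ :=
  ∑' l : ExcF A Fv Fe x y,
    ENNReal.ofReal (Real.exp (lam * (l.1.length + 1))) * chainWeight A (x :: (l.1 ++ [y]))

/-! An excursion away from `F \ {z}` either avoids `z`, and is then exactly an excursion away
from `F`, or it visits `z`. Cutting it at its successive visits to `z` writes it uniquely as an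
excursion `x → z` away from `F`, then `k ≥ 0` excursions `z → z`, then one `z → y`; as `z` is
isolated in `F`, no one-step piece can use an edge of `F`. The weight `e^{λℓ}𝒜` is multiplicative
under this cutting, so the sum over the pieces factors into the `k`-th term of the series. -/

theorem ENNReal.tsum_prod_mul {α β : Type*} (f : α → ℝ≥0∞) (g : β → ℝ≥0∞) :
    ∑' p : α × β, f p.1 * g p.2 = (∑' a, f a) * ∑' b, g b := by
  rw [ENNReal.tsum_prod (f := fun a b => f a * g b), ← ENNReal.tsum_mul_right]
  simp only [ENNReal.tsum_mul_left]

theorem ENNReal.tsum_prod_fin_eq_pow {ι : Type*} (f : ι → ℝ≥0∞) :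
    ∀ k : ℕ, ∑' v : Fin k → ι, ∏ j, f (v j) = (∑' i, f i) ^ k
  | 0 => by rw [tsum_eq_single finZeroElim (fun v hv => (hv (Subsingleton.elim _ _)).elim)]; simp
  | k + 1 => by
    rw [pow_succ', ← ENNReal.tsum_prod_fin_eq_pow f k, ← ENNReal.tsum_prod_mul,
      ← (Fin.consEquiv fun _ => ι).tsum_eq]
    simp [Fin.consEquiv, Fin.prod_univ_succ]

theorem ENNReal.tsum_list_prod_map {ι : Type*} (f : ι → ℝ≥0∞) :
    ∑' l : List ι, (l.map f).prod = ∑' k : ℕ, (∑' i, f i) ^ k := by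
  rw [← List.equivSigmaTuple.symm.tsum_eq, ENNReal.tsum_sigma']
  simp [List.equivSigmaTuple, List.map_ofFn, List.prod_ofFn, ENNReal.tsum_prod_fin_eq_pow]

theorem Set.InjOn.tsum_eq {α β M : Type*} [AddCommMonoid M] [TopologicalSpace M]
    {i : α → β} {s : Set α} (hi : Set.InjOn i s) {f : β → M} {g : α → M}
    (hg : Function.support g ⊆ s) (hf : Function.support f ⊆ i '' s)
    (hfg : ∀ a ∈ s, f (i a) = g a) : ∑' b, f b = ∑' a, g a := by
  rw [← tsum_subtype_eq_of_support_subset hg,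
    ← (Set.injOn_iff_injective.mp hi).tsum_eq (by simpa [Set.range_domRestrict] using hf)]
  exact tsum_congr fun a => hfg a a.2

theorem chainWeight_append_cons (A : S → S → ℝ≥0∞) (z : S) (l₂ : List S) :
    ∀ l₁ : List S,
      chainWeight A (l₁ ++ z :: l₂) = chainWeight A (l₁ ++ [z]) * chainWeight A (z :: l₂)
  | [] => by simp [chainWeight]
  | [a] => by simp [chainWeight]
  | a :: b :: t => by
    simp only [List.cons_append, chainWeight]
    rw [← List.cons_append, chainWeight_append_cons A z l₂ (b :: t), List.cons_append, mul_assoc]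

noncomputable def excWeight (A : S → S → ℝ≥0∞) (lam : ℝ) (x y : S) (l : List S) : ℝ≥0∞ :=
  ENNReal.ofReal (Real.exp (lam * (l.length + 1))) * chainWeight A (x :: (l ++ [y]))

theorem excWeight_append_cons (A : S → S → ℝ≥0∞) (lam : ℝ) (x y z : S) (a b : List S) :
    excWeight A lam x y (a ++ z :: b) = excWeight A lam x z a * excWeight A lam z y b := by
  have hlen : lam * (((a ++ z :: b).length : ℝ) + 1) =
      lam * (a.length + 1) + lam * (b.length + 1) := by
    simp only [List.length_append, List.length_cons]
    push_cast
    ring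
  have hchain : chainWeight A (x :: (a ++ z :: b ++ [y])) =
      chainWeight A (x :: (a ++ [z])) * chainWeight A (z :: (b ++ [y])) := by
    simpa using chainWeight_append_cons A z (b ++ [y]) (x :: a)
  rw [excWeight, excWeight, excWeight, hlen, hchain, Real.exp_add,
    ENNReal.ofReal_mul (Real.exp_nonneg _)]
  ring

theorem phiF_eq_tsum_indicator (A : S → S → ℝ≥0∞) (Fv : Set S) (Fe : Set (S × S))
    (x y : S) (lam : ℝ) :
    phiF A Fv Fe x y lam = ∑' l, (ExcF A Fv Fe x y).indicator (excWeight A lam x y) l :=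
  tsum_subtype (ExcF A Fv Fe x y) (excWeight A lam x y)

section Excursions

variable {A : S → S → ℝ≥0∞} {Fv : Set S} {Fe : Set (S × S)} {x y z : S} {l : List S}

theorem mem_excF_iff : l ∈ ExcF A Fv Fe x y ↔
    (x :: (l ++ [y])).IsChain (fun a b => 0 < A a b) ∧ (∀ v ∈ l, v ∉ Fv) ∧
      (l = [] → (x, y) ∉ Fe) :=
  Iff.rfl

theorem notMem_of_mem_excF (hl : l ∈ ExcF A Fv Fe x y) (hz : z ∈ Fv) : z ∉ l :=
  fun hzl => hl.2.1 z hzl hz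

theorem mem_excF_sdiff_iff_of_notMem (hzl : z ∉ l) :
    l ∈ ExcF A (Fv \ {z}) Fe x y ↔ l ∈ ExcF A Fv Fe x y := by
  have : ∀ v ∈ l, v ∉ Fv \ {z} ↔ v ∉ Fv := fun v hv => by
    simp [show v ≠ z by rintro rfl; exact hzl hv]
  simp only [mem_excF_iff, forall_congr' fun v => imp_congr_right (this v)]

theorem excF_sdiff_eq_union (hz : z ∈ Fv) :
    ExcF A (Fv \ {z}) Fe x y = ExcF A Fv Fe x y ∪ (ExcF A (Fv \ {z}) Fe x y ∩ {l | z ∈ l}) := by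
  ext l
  by_cases hzl : z ∈ l
  · have : l ∉ ExcF A Fv Fe x y := fun h => notMem_of_mem_excF h hz hzl
    simp [hzl, this]
  · simp [hzl, mem_excF_sdiff_iff_of_notMem hzl]

end Excursions

def glue (z : S) : List S → List (List S) → List S → List S
  | a, [], b => a ++ z :: b
  | a, p :: m, b => a ++ z :: glue z p m b

def piecesAvoiding (z : S) : Set (List S × List (List S) × List S) :=
  {t | z ∉ t.1 ∧ (∀ p ∈ t.2.1, z ∉ p) ∧ z ∉ t.2.2}

theorem cons_glue (z c : S) (a : List S) (m : List (List S)) (b : List S) :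
    c :: glue z a m b = glue z (c :: a) m b := by
  cases m <;> rfl

theorem mem_glue (z : S) (a : List S) (m : List (List S)) (b : List S) : z ∈ glue z a m b := by
  cases m <;> simp [glue]

theorem excWeight_glue (A : S → S → ℝ≥0∞) (lam : ℝ) (z y : S) (b : List S) :
    ∀ (m : List (List S)) (x : S) (a : List S),
      excWeight A lam x y (glue z a m b) =
        excWeight A lam x z a * (m.map (excWeight A lam z z)).prod * excWeight A lam z y b
  | [], x, a => by simp [glue, excWeight_append_cons]
  | p :: m, x, a => by
    simp only [glue, excWeight_append_cons, excWeight_glue A lam z y b m z p, List.map_cons,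
      List.prod_cons]
    ring

theorem splitOn_glue [DecidableEq S] {z : S} {b : List S} (hb : z ∉ b) :
    ∀ {m : List (List S)} {a : List S}, z ∉ a → (∀ p ∈ m, z ∉ p) →
      (glue z a m b).splitOn z = a :: m ++ [b]
  | [], a, ha, _ => by
    simp [glue, List.splitOn_append_cons_self_of_not_mem ha, List.splitOn_eq_singleton hb]
  | p :: m, a, ha, hm => by
    rw [glue, List.splitOn_append_cons_self_of_not_mem ha,
      splitOn_glue hb (hm p List.mem_cons_self) fun q hq => hm q (List.mem_cons_of_mem p hq)]
    rfl

theorem glue_injOn (z : S) :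
    Set.InjOn (fun t : List S × List (List S) × List S => glue z t.1 t.2.1 t.2.2)
      (piecesAvoiding z) := by
  classical
  rintro ⟨a, m, b⟩ ⟨ha, hm, hb⟩ ⟨a', m', b'⟩ ⟨ha', hm', hb'⟩ h
  have := congrArg (List.splitOn z) h
  simp only [splitOn_glue hb ha hm, splitOn_glue hb' ha' hm', List.cons_append,
    List.cons.injEq] at this
  obtain ⟨rfl, hmb⟩ := this
  obtain ⟨rfl, hbb⟩ := List.append_inj' hmb rfl
  rw [List.singleton_inj.mp hbb]

theorem mem_image_glue {z : S} :
    ∀ {l : List S}, z ∈ l →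
      l ∈ (fun t : List S × List (List S) × List S => glue z t.1 t.2.1 t.2.2) ''
        piecesAvoiding z
  | c :: t, hzl => by
    by_cases hzt : z ∈ t
    · obtain ⟨⟨a, m, b⟩, ⟨ha, hm, hb⟩, rfl⟩ := mem_image_glue hzt
      by_cases hc : c = z
      · subst hc
        refine ⟨([], a :: m, b), ⟨List.not_mem_nil, ?_, hb⟩, rfl⟩
        simpa using ⟨ha, hm⟩
      · exact ⟨(c :: a, m, b), ⟨by simp [Ne.symm hc, ha], hm, hb⟩, (cons_glue z c a m b).symm⟩
    · obtain rfl : z = c := by simpa [hzt] using hzl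
      exact ⟨([], [], t), ⟨List.not_mem_nil, by simp, hzt⟩, rfl⟩

section IsolatedVertex

variable {A : S → S → ℝ≥0∞} {Fv : Set S} {Fe : Set (S × S)} {z : S}

theorem append_cons_mem_excF_sdiff_iff (hiso : ∀ e ∈ Fe, e.1 ≠ z ∧ e.2 ≠ z) {x y : S}
    {a t : List S} (ha : z ∉ a) :
    a ++ z :: t ∈ ExcF A (Fv \ {z}) Fe x y ↔
      a ∈ ExcF A Fv Fe x z ∧ t ∈ ExcF A (Fv \ {z}) Fe z y := by
  have hxz : (x, z) ∉ Fe := fun h => (hiso _ h).2 rfl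
  have hzy : (z, y) ∉ Fe := fun h => (hiso _ h).1 rfl
  have hchain : x :: (a ++ z :: t ++ [y]) = x :: a ++ z :: (t ++ [y]) := by simp
  have hvert : (∀ v ∈ a, v ∉ Fv \ {z}) ↔ ∀ v ∈ a, v ∉ Fv :=
    forall₂_congr fun v hv => by simp [show v ≠ z by rintro rfl; exact ha hv]
  rw [mem_excF_iff, mem_excF_iff, mem_excF_iff, hchain, List.isChain_split]
  simp only [List.forall_mem_append, List.forall_mem_cons, hvert]
  grind

theorem glue_mem_excF_sdiff_iff (hiso : ∀ e ∈ Fe, e.1 ≠ z ∧ e.2 ≠ z) {y : S} {b : List S}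
    (hb : z ∉ b) :
    ∀ {m : List (List S)} {x : S} {a : List S}, z ∉ a → (∀ p ∈ m, z ∉ p) →
      (glue z a m b ∈ ExcF A (Fv \ {z}) Fe x y ↔
        a ∈ ExcF A Fv Fe x z ∧ (∀ p ∈ m, p ∈ ExcF A Fv Fe z z) ∧ b ∈ ExcF A Fv Fe z y)
  | [], x, a, ha, _ => by
    simp [glue, append_cons_mem_excF_sdiff_iff hiso ha, mem_excF_sdiff_iff_of_notMem hb]
  | p :: m, x, a, ha, hm => by
    rw [glue, append_cons_mem_excF_sdiff_iff hiso ha,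
      glue_mem_excF_sdiff_iff hiso hb (hm p List.mem_cons_self)
        fun q hq => hm q (List.mem_cons_of_mem p hq)]
    simp [and_assoc]

theorem indicator_excF_sdiff_glue (hiso : ∀ e ∈ Fe, e.1 ≠ z ∧ e.2 ≠ z) (lam : ℝ) (x y : S)
    {a : List S} {m : List (List S)} {b : List S} (ht : (a, m, b) ∈ piecesAvoiding z) :
    (ExcF A (Fv \ {z}) Fe x y ∩ {l | z ∈ l}).indicator (excWeight A lam x y) (glue z a m b) =
      (ExcF A Fv Fe x z).indicator (excWeight A lam x z) a *
        ((m.map ((ExcF A Fv Fe z z).indicator (excWeight A lam z z))).prod *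
          (ExcF A Fv Fe z y).indicator (excWeight A lam z y) b) := by
  obtain ⟨ha, hm, hb⟩ := ht
  have hmem := glue_mem_excF_sdiff_iff (A := A) (Fv := Fv) (x := x) (y := y) hiso hb ha hm
  by_cases h : a ∈ ExcF A Fv Fe x z ∧ (∀ p ∈ m, p ∈ ExcF A Fv Fe z z) ∧ b ∈ ExcF A Fv Fe z y
  · obtain ⟨ha', hm', hb'⟩ := h
    have hglue : glue z a m b ∈ ExcF A (Fv \ {z}) Fe x y ∩ {l | z ∈ l} :=
      ⟨hmem.2 ⟨ha', hm', hb'⟩, mem_glue z a m b⟩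
    rw [Set.indicator_of_mem hglue, excWeight_glue,
      Set.indicator_of_mem ha', Set.indicator_of_mem hb',
      List.map_congr_left fun p hp => Set.indicator_of_mem (hm' p hp) _, mul_assoc]
  · rw [Set.indicator_of_notMem fun h' => h (hmem.1 h'.1)]
    simp only [not_and_or, not_forall] at h
    rcases h with ha' | ⟨p, hp, hp'⟩ | hb'
    · simp [Set.indicator_of_notMem ha']
    · have : (m.map ((ExcF A Fv Fe z z).indicator (excWeight A lam z z))).prod = 0 :=
        List.prod_eq_zero (List.mem_map.mpr ⟨p, hp, Set.indicator_of_notMem hp' _⟩)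
      simp [this]
    · simp [Set.indicator_of_notMem hb']

theorem tsum_indicator_excF_sdiff_visiting (hz : z ∈ Fv)
    (hiso : ∀ e ∈ Fe, e.1 ≠ z ∧ e.2 ≠ z) (x y : S) (lam : ℝ) :
    ∑' l, (ExcF A (Fv \ {z}) Fe x y ∩ {l | z ∈ l}).indicator (excWeight A lam x y) l =
      phiF A Fv Fe x z lam * ((∑' k : ℕ, phiF A Fv Fe z z lam ^ k) * phiF A Fv Fe z y lam) := by
  set I := fun u v => (ExcF A Fv Fe u v).indicator (excWeight A lam u v)
  have hsupp : Function.support (fun t : List S × List (List S) × List S =>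
      I x z t.1 * ((t.2.1.map (I z z)).prod * I z y t.2.2)) ⊆ piecesAvoiding z := by
    rintro ⟨a, m, b⟩ ht
    simp only [Function.mem_support, mul_ne_zero_iff] at ht
    obtain ⟨ha, hm, hb⟩ := ht
    refine ⟨notMem_of_mem_excF (Set.mem_of_indicator_ne_zero ha) hz, fun p hp => ?_,
      notMem_of_mem_excF (Set.mem_of_indicator_ne_zero hb) hz⟩
    refine notMem_of_mem_excF (Set.mem_of_indicator_ne_zero fun h0 : I z z p = 0 => hm ?_) hz
    exact List.prod_eq_zero (List.mem_map.mpr ⟨p, hp, h0⟩)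
  have himage : Function.support
      ((ExcF A (Fv \ {z}) Fe x y ∩ {l | z ∈ l}).indicator (excWeight A lam x y)) ⊆
        (fun t => glue z t.1 t.2.1 t.2.2) '' piecesAvoiding z :=
    fun l hl => mem_image_glue (Set.mem_of_indicator_ne_zero hl).2
  rw [(glue_injOn z).tsum_eq hsupp himage fun t ht => indicator_excF_sdiff_glue hiso lam x y ht,
    ENNReal.tsum_prod_mul (I x z) fun q : List (List S) × List S =>
      (q.1.map (I z z)).prod * I z y q.2,
    ENNReal.tsum_prod_mul (fun m : List (List S) => (m.map (I z z)).prod) (I z y),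
    ENNReal.tsum_list_prod_map]
  simp only [I, phiF_eq_tsum_indicator]

end IsolatedVertex

theorem phiF_remove_isolated_vertex_general
    (A : S → S → ℝ≥0∞)
    (Fv : Set S) (Fe : Set (S × S))
    (z : S) (hz : z ∈ Fv) (hiso : ∀ e ∈ Fe, e.1 ≠ z ∧ e.2 ≠ z)
    (x y : S) (lam : ℝ) :
    phiF A (Fv \ {z}) Fe x y lam
      = phiF A Fv Fe x y lam
        + ∑' k : ℕ, phiF A Fv Fe x z lam * (phiF A Fv Fe z z lam) ^ k * phiF A Fv Fe z y lam := by
  have hdisj : Disjoint (ExcF A Fv Fe x y) (ExcF A (Fv \ {z}) Fe x y ∩ {l | z ∈ l}) :=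
    Set.disjoint_left.mpr fun l hl hl' => notMem_of_mem_excF hl hz hl'.2
  rw [phiF_eq_tsum_indicator, excF_sdiff_eq_union hz, Set.indicator_union_of_disjoint hdisj,
    ENNReal.tsum_add, ← phiF_eq_tsum_indicator, tsum_indicator_excF_sdiff_visiting hz hiso,
    ENNReal.tsum_mul_right, ENNReal.tsum_mul_left, mul_assoc]

theorem phiF_remove_isolated_vertex [Countable S] [DecidableEq S]
    (A : S → S → ℝ≥0∞) (hfin : ∀ x y, A x y ≠ ⊤)
    (Fv : Set S) (Fe : Set (S × S))
    (hsub : ∀ e ∈ Fe, 0 < A e.1 e.2 ∧ e.1 ∈ Fv ∧ e.2 ∈ Fv)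
    (z : S) (hz : z ∈ Fv) (hiso : ∀ e ∈ Fe, e.1 ≠ z ∧ e.2 ≠ z)
    (x y : S) (hx : x ∈ Fv) (hxz : x ≠ z) (hy : y ∈ Fv) (hyz : y ≠ z) (lam : ℝ) :
    phiF A (Fv \ {z}) Fe x y lam
      = phiF A Fv Fe x y lam
        + ∑' k : ℕ, phiF A Fv Fe x z lam * (phiF A Fv Fe z z lam) ^ k * phiF A Fv Fe z y lam :=
  phiF_remove_isolated_vertex_general A Fv Fe z hz hiso x y lam
end
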